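/- Let τ = (1 + √5)/2, and set p = τ⁻¹, q = τ^(−1/2), r = τ^(−1/2), s = −τ⁻¹. Let F = !![p, q; r, s] ∈ Matrix (Fin 2) (Fin 2) ℝ. Then: (i) F is symmetric and orthogonal, with F * F = 1 (so with t = 1 the 2×2 pentagon equation diag(1,t)·diag(1,t) = F·diag(1,t)·F holds); (ii) setting M₁ = !![1,0,0; 0,p,q; 0,r,s], P = !![0,1,0; 1,0,0; 0,0,1] and M₂ = !![p,0,q; 0,1,0; r,0,s] in Matrix (Fin 3) (Fin 3) ℝ, the 3×3 pentagon equation M₁ * P * M₁ = M₂ * M₁ * M₂ holds. Hence F^{111}_0 = 1 and F^{111}_1 = F solve the pentagon equations of the Fibonacci anyon model together with the unitarity constraint. -/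

import Mathlib

/-!
With `τ = φ` the golden ratio, `p = φ⁻¹ = -ψ` is a root of `p² + p = 1` and `q² = p`. Every entry
of the two pentagon equations reduces to a polynomial identity in `p` and `q` that follows from
these two relations; in particular `p² + q² = 1` makes `F` an orthogonal reflection.
-/

open Matrix

/-- `p = τ⁻¹`, with `τ` the golden ratio. -/
noncomputable def fibFp : ℝ := (((1 + Real.sqrt 5) / 2))⁻¹

/-- `q = τ^(−1/2)`, with `τ` the golden ratio. -/
noncomputable def fibFq : ℝ := ((1 + Real.sqrt 5) / 2) ^ (-(1 / 2 : ℝ))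

theorem transpose_fin_two_symm {α : Type*} (a b c : α) :
    !![a, b; b, c]ᵀ = !![a, b; b, c] := by
  ext i j
  fin_cases i <;> fin_cases j <;> rfl

section

variable {R : Type*} [CommRing R]

theorem fin_two_reflection_mul_self {p q : R} (h : p ^ 2 + q ^ 2 = 1) :
    !![p, q; q, -p] * !![p, q; q, -p] = 1 := by
  rw [mul_fin_two, one_fin_two]
  ext i j
  fin_cases i <;> fin_cases j <;>
    simp only [of_apply, cons_val', cons_val_zero, cons_val_one, cons_val_fin_one,
      Fin.isValue, Fin.zero_eta, Fin.mk_one] <;>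
    grind

theorem pentagon_fin_three {p q : R} (hq : q ^ 2 = p) (hp : p ^ 2 + p = 1) :
    !![1, 0, 0; 0, p, q; 0, q, -p] * !![0, 1, 0; 1, 0, 0; 0, 0, 1] *
        !![1, 0, 0; 0, p, q; 0, q, -p] =
      !![p, 0, q; 0, 1, 0; q, 0, -p] * !![1, 0, 0; 0, p, q; 0, q, -p] *
        !![p, 0, q; 0, 1, 0; q, 0, -p] := by
  simp only [mul_fin_three]
  ext i j
  fin_cases i <;> fin_cases j <;>
    simp only [of_apply, cons_val', cons_val_zero, cons_val_one, cons_val_fin_one, cons_val,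
      Fin.isValue, Fin.zero_eta, Fin.mk_one, Fin.reduceFinMk] <;>
    grind

end

open Real goldenRatio

theorem fibFp_eq_neg_goldenConj : fibFp = -ψ := inv_goldenRatio

theorem fibFp_sq_add_self : fibFp ^ 2 + fibFp = 1 := by
  rw [fibFp_eq_neg_goldenConj]
  linear_combination goldenConj_sq

theorem fibFq_sq : fibFq ^ 2 = fibFp := by
  rw [fibFq, fibFp, rpow_neg goldenRatio_pos.le, ← sqrt_eq_rpow, inv_pow,
    sq_sqrt goldenRatio_pos.le]

/-- The F-matrices `F^{111}_0 = 1` and `F^{111}_1 = !![τ⁻¹, τ^(−1/2); τ^(−1/2), −τ⁻¹]`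
solve the pentagon equations of the Fibonacci anyon model: `F` is symmetric and
orthogonal with `F * F = 1` (so the 2×2 pentagon equation with `t = 1` holds),
and the 3×3 pentagon equation `M₁ * P * M₁ = M₂ * M₁ * M₂` holds. -/
theorem fibonacci_pentagon_solution :
    (!![fibFp, fibFq; fibFq, -fibFp] : Matrix (Fin 2) (Fin 2) ℝ)ᵀ =
      !![fibFp, fibFq; fibFq, -fibFp] ∧
    (!![fibFp, fibFq; fibFq, -fibFp] : Matrix (Fin 2) (Fin 2) ℝ) *
      !![fibFp, fibFq; fibFq, -fibFp] = 1 ∧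
    (!![(1:ℝ), 0; 0, 1] : Matrix (Fin 2) (Fin 2) ℝ) * !![(1:ℝ), 0; 0, 1] =
      !![fibFp, fibFq; fibFq, -fibFp] * !![(1:ℝ), 0; 0, 1] *
        !![fibFp, fibFq; fibFq, -fibFp] ∧
    (!![1, 0, 0; 0, fibFp, fibFq; 0, fibFq, -fibFp] : Matrix (Fin 3) (Fin 3) ℝ) *
        !![0, 1, 0; 1, 0, 0; 0, 0, 1] *
        !![1, 0, 0; 0, fibFp, fibFq; 0, fibFq, -fibFp] =
      !![fibFp, 0, fibFq; 0, 1, 0; fibFq, 0, -fibFp] *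
        !![1, 0, 0; 0, fibFp, fibFq; 0, fibFq, -fibFp] *
        !![fibFp, 0, fibFq; 0, 1, 0; fibFq, 0, -fibFp] := by
  have hF : (!![fibFp, fibFq; fibFq, -fibFp] : Matrix (Fin 2) (Fin 2) ℝ) *
      !![fibFp, fibFq; fibFq, -fibFp] = 1 :=
    fin_two_reflection_mul_self (by rw [fibFq_sq, fibFp_sq_add_self])
  refine ⟨transpose_fin_two_symm _ _ _, hF, ?_, pentagon_fin_three fibFq_sq fibFp_sq_add_self⟩
  rw [← one_fin_two, mul_one, mul_one, hF]
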